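/- For every n ≥ 1, the map ρ ↦ (h_1,…,h_n), where h_i = #{k : i < k ≤ n, ρ_k < ρ_i}, is a bijection from the set of (3,1,2)-avoiding permutations of {1,…,n} onto the set H_n of sequences (h_1,…,h_n) of nonnegative integers with h_n = 0 and h_i ≤ h_{i+1} + 1 for all 1 ≤ i ≤ n−1. -/

import Mathlib

/-- The 312-height of entry `i` of `ρ`: the number of entries to the right of `i`
that are smaller than `ρ i`. -/
def height312 {n : ℕ} (ρ : Equiv.Perm (Fin n)) (i : Fin n) : ℕ :=
  (Finset.univ.filter (fun k => i < k ∧ ρ k < ρ i)).card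

/-!
The height vector is the Lehmer code of `ρ`: if `ρ` and `σ` agree before position `i`, they
take the same set of values from position `i` on, and `ρ i` is the element of rank `h_i` in that
set. So the code is injective on all permutations, and since exactly `n!` sequences satisfy
`h_i < n - i`, every such sequence is a code.

For adjacent positions, `h_i ≤ h_{i+1} + 1` fails exactly when some `c > i + 1` has
`ρ (i+1) < ρ c < ρ i`. An occurrence `a < b < c` of 312 yields one of this adjacent form at the
last position `x` of `[a, b)` with `ρ x > ρ c`. Hence on permutations the defining condition of
`H_n` is 312-avoidance, and sequences in `H_n` satisfy `h_i < n - i`.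
-/

open Finset Function

lemma Nat.exists_le_lt_and_not_add_one {p : ℕ → Prop} {a b : ℕ} (hab : a ≤ b) (ha : p a)
    (hb : ¬ p b) : ∃ k, a ≤ k ∧ k < b ∧ p k ∧ ¬ p (k + 1) := by
  induction b, hab using Nat.le_induction with
  | base => exact absurd ha hb
  | succ b hab ih =>
    by_cases hpb : p b
    · exact ⟨b, hab, b.lt_add_one, hpb, hb⟩
    · obtain ⟨k, hak, hkb, hk⟩ := ih hpb
      exact ⟨k, hak, hkb.trans b.lt_add_one, hk⟩

lemma Finset.eq_of_card_filter_lt_eq {α : Type*} [LinearOrder α] {s : Finset α} {u v : α}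
    (hu : u ∈ s) (hv : v ∈ s) (h : #{w ∈ s | w < u} = #{w ∈ s | w < v}) : u = v := by
  have key : ∀ {u v}, u ∈ s → u < v → #{w ∈ s | w < u} < #{w ∈ s | w < v} := by
    intro u v hu huv
    refine card_lt_card ((ssubset_iff_of_subset ?_).2 ⟨u, ?_, ?_⟩)
    · intro w hw
      simp only [mem_filter] at hw ⊢
      exact ⟨hw.1, hw.2.trans huv⟩
    · simp [hu, huv]
    · simp
  rcases lt_trichotomy u v with huv | rfl | hvu
  · exact absurd h (key hu huv).ne
  · rfl
  · exact absurd h (key hv hvu).ne'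

lemma image_Ici_eq_of_eqOn_Iio {α β : Type*} [LinearOrder α] [LocallyFiniteOrderTop α]
    [LocallyFiniteOrderBot α] [DecidableEq β] {ρ σ : α ≃ β} {i : α}
    (h : ∀ j < i, ρ j = σ j) :
    (Ici i).image ρ = (Ici i).image σ := by
  have hcompl : ∀ τ : α ≃ β, ∀ w, w ∈ (Ici i).image τ ↔ w ∉ (Iio i).image τ := by
    intro τ w
    simp only [mem_image, mem_Ici, mem_Iio, not_exists, not_and]
    constructor
    · rintro ⟨k, hik, rfl⟩ j hji hjk
      exact (hji.trans_le hik).ne (τ.injective hjk)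
    · intro hw
      exact ⟨τ.symm w, not_lt.1 fun hlt => hw _ hlt (by simp), by simp⟩
  have himage : (Iio i).image ρ = (Iio i).image σ := image_congr fun j hj => h j (mem_Iio.1 hj)
  ext w
  rw [hcompl, hcompl, himage]

variable {n : ℕ}

def Avoids312 (ρ : Equiv.Perm (Fin n)) : Prop :=
  ∀ a b c : Fin n, a < b → b < c → ¬(ρ b < ρ c ∧ ρ c < ρ a)

lemma height312_lt_sub (ρ : Equiv.Perm (Fin n)) (i : Fin n) : height312 ρ i < n - i := by
  have : height312 ρ i ≤ #(Ioi i) := card_le_card fun k hk => mem_Ioi.2 (mem_filter.1 hk).2.1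
  rw [Fin.card_Ioi] at this
  omega

lemma height312_eq_card_image_Ici (ρ : Equiv.Perm (Fin n)) (i : Fin n) :
    height312 ρ i = #{w ∈ (Ici i).image ρ | w < ρ i} := by
  rw [filter_image, card_image_of_injective _ ρ.injective, height312]
  congr 1
  ext k
  simp only [mem_filter, mem_univ, true_and, mem_Ici]
  constructor
  · rintro ⟨hik, hk⟩
    exact ⟨hik.le, hk⟩
  · rintro ⟨hik, hk⟩
    exact ⟨hik.lt_of_ne (by rintro rfl; exact hk.false), hk⟩

theorem height312_injective : Injective (height312 (n := n)) := by
  intro ρ σ hρσ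
  refine Equiv.ext fun i => ?_
  induction i using WellFoundedLT.induction with
  | _ i ih =>
    have hT := image_Ici_eq_of_eqOn_Iio (ρ := ρ) (σ := σ) ih
    have hi : ρ i ∈ (Ici i).image ρ := mem_image_of_mem _ (mem_Ici.2 le_rfl)
    refine eq_of_card_filter_lt_eq hi ?_ ?_
    · rw [hT]; exact mem_image_of_mem _ (mem_Ici.2 le_rfl)
    · rw [← height312_eq_card_image_Ici, hT, ← height312_eq_card_image_Ici, hρσ]

lemma card_pi_fin_sub : Fintype.card ((i : Fin n) → Fin (n - i)) = n.factorial := by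
  rw [Fintype.card_pi]
  simp only [Fintype.card_fin]
  rw [Fin.prod_univ_eq_prod_range (fun i => n - i), ← Nat.descFactorial_eq_prod_range,
    Nat.descFactorial_self]

lemma exists_height312_eq (h : Fin n → ℕ) (hh : ∀ i, h i < n - i) :
    ∃ ρ : Equiv.Perm (Fin n), height312 ρ = h := by
  let code : Equiv.Perm (Fin n) → (i : Fin n) → Fin (n - i) :=
    fun ρ i => ⟨height312 ρ i, height312_lt_sub ρ i⟩
  have hcode : Injective code := fun ρ σ hρσ =>
    height312_injective (funext fun i => congrArg Fin.val (congrFun hρσ i))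
  have hbij : Bijective code := (Fintype.bijective_iff_injective_and_card code).2
    ⟨hcode, by rw [Fintype.card_perm, Fintype.card_fin, card_pi_fin_sub]⟩
  obtain ⟨ρ, hρ⟩ := hbij.2 fun i => ⟨h i, hh i⟩
  exact ⟨ρ, funext fun i => congrArg Fin.val (congrFun hρ i)⟩

lemma height312_le_add_one_iff (ρ : Equiv.Perm (Fin n)) {i j : Fin n} (hij : i.val + 1 = j.val) :
    height312 ρ i ≤ height312 ρ j + 1 ↔ ∀ c, j < c → ¬(ρ j < ρ c ∧ ρ c < ρ i) := by
  have hlt : i < j := Fin.lt_def.2 (by omega)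
  have hafter : ∀ k, i < k → k ≠ j → j < k := fun k hk hkj =>
    Fin.lt_def.2 (by have := Fin.val_ne_of_ne hkj; have := Fin.lt_def.1 hk; omega)
  constructor
  · rintro hle c hjc ⟨hjc', hci⟩
    have hsub : insert j (insert c (univ.filter fun k => j < k ∧ ρ k < ρ j))
        ⊆ univ.filter fun k => i < k ∧ ρ k < ρ i := by
      intro k hk
      simp only [mem_insert, mem_filter, mem_univ, true_and] at hk ⊢
      rcases hk with rfl | rfl | ⟨hjk, hk⟩
      · exact ⟨hlt, hjc'.trans hci⟩
      · exact ⟨hlt.trans hjc, hci⟩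
      · exact ⟨hlt.trans hjk, hk.trans (hjc'.trans hci)⟩
    have hcard := card_le_card hsub
    rw [card_insert_of_notMem (by simp [hjc.ne]), card_insert_of_notMem (by simp [hjc'.not_gt])]
      at hcard
    exact absurd hle (by unfold height312; omega)
  · intro H
    calc height312 ρ i ≤ #(insert j (univ.filter fun k => j < k ∧ ρ k < ρ j)) := by
          refine card_le_card fun k hk => ?_
          simp only [mem_insert, mem_filter, mem_univ, true_and] at hk ⊢
          by_cases hkj : k = j
          · exact Or.inl hkj
          · have hjk := hafter k hk.1 hkj
            refine Or.inr ⟨hjk, lt_of_not_ge fun hjk' =>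
              H k hjk ⟨hjk'.lt_of_ne (ρ.injective.ne (Ne.symm hkj)), hk.2⟩⟩
      _ ≤ height312 ρ j + 1 := card_insert_le _ _

lemma avoids312_of_adjacent {ρ : Equiv.Perm (Fin n)}
    (H : ∀ i : ℕ, ∀ hi : i + 1 < n, ∀ c, ⟨i + 1, hi⟩ < c →
      ¬(ρ ⟨i + 1, hi⟩ < ρ c ∧ ρ c < ρ ⟨i, Nat.lt_of_succ_lt hi⟩)) :
    Avoids312 ρ := by
  rintro a b c hab hbc ⟨hbc', hca⟩
  obtain ⟨k, -, hkb, ⟨hk, hck⟩, hk1⟩ := Nat.exists_le_lt_and_not_add_one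
    (p := fun k => ∃ hk : k < n, ρ c < ρ ⟨k, hk⟩) hab.le ⟨a.2, hca⟩
    fun ⟨_, h⟩ => lt_asymm hbc' h
  have hk1n : k + 1 < n := by omega
  have hyc : (⟨k + 1, hk1n⟩ : Fin n) < c := Fin.lt_def.2 (by simp only; omega)
  have hyc' : ρ ⟨k + 1, hk1n⟩ < ρ c :=
    lt_of_le_of_ne (not_lt.1 fun h => hk1 ⟨hk1n, h⟩) (ρ.injective.ne hyc.ne)
  exact H k hk1n c hyc ⟨hyc', hck⟩

lemma lt_sub_of_last_eq_zero {h : Fin n → ℕ} (hn : 1 ≤ n)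
    (hlast : h ⟨n - 1, Nat.sub_one_lt_of_lt hn⟩ = 0)
    (hstep : ∀ i : ℕ, ∀ hi : i + 1 < n,
      h ⟨i, Nat.lt_of_succ_lt hi⟩ ≤ h ⟨i + 1, hi⟩ + 1) :
    ∀ i, h i < n - i := by
  suffices H : ∀ d i (hi : i < n), n - 1 - i = d → h ⟨i, hi⟩ ≤ d by
    intro i
    have := H _ i i.2 rfl
    rw [Fin.eta] at this
    omega
  intro d
  induction d with
  | zero =>
    intro i hi hd
    obtain rfl : i = n - 1 := by omega
    exact hlast.le
  | succ d ih =>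
    intro i hi hd
    have := hstep i (by omega)
    have := ih (i + 1) (by omega) (by omega)
    omega

/-- For `n ≥ 1`, the 312-height-vector map is a bijection from the set of
(3,1,2)-avoiding permutations of {1,…,n} onto the set `H_n` of sequences
`(h_1,…,h_n)` of nonnegative integers with `h_n = 0` and `h_i ≤ h_{i+1} + 1`. -/
theorem height312_bijOn_avoiding (n : ℕ) (hn : 1 ≤ n) :
    Set.BijOn (fun (ρ : Equiv.Perm (Fin n)) => fun i : Fin n => height312 ρ i)
      {ρ | ∀ a b c : Fin n, a < b → b < c → ¬(ρ b < ρ c ∧ ρ c < ρ a)}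
      {h : Fin n → ℕ | h ⟨n - 1, by omega⟩ = 0 ∧
        ∀ i : ℕ, ∀ hi : i + 1 < n, h ⟨i, by omega⟩ ≤ h ⟨i + 1, hi⟩ + 1} := by
  refine ⟨fun ρ hρ => ⟨?_, fun i hi => ?_⟩, fun ρ _ σ _ h => height312_injective h, ?_⟩
  · simpa [Nat.sub_sub_self hn] using height312_lt_sub ρ ⟨n - 1, by omega⟩
  · exact (height312_le_add_one_iff ρ (i := ⟨i, by omega⟩) (j := ⟨i + 1, hi⟩) rfl).2
      fun c hc => hρ _ _ c (Fin.lt_def.2 (by simp)) hc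
  · rintro h ⟨hlast, hstep⟩
    obtain ⟨ρ, rfl⟩ := exists_height312_eq h (lt_sub_of_last_eq_zero hn hlast hstep)
    refine ⟨ρ, avoids312_of_adjacent fun i hi => ?_, rfl⟩
    exact (height312_le_add_one_iff ρ (i := ⟨i, by omega⟩) (j := ⟨i + 1, hi⟩) rfl).1
      (hstep i hi)
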